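/- arXiv:2208.07457 — 9 statements merged into one kernel-verified Lean document; each statement's English description precedes it below -/
import Mathlib

section
/- A set function F : 2^V → ℝ is submodular if and only if its Lovász extension f : ℝ^N → ℝ is convex. -/
open scoped Classical
open MeasureTheory

/-- The Lovász extension of a set function `F` (with `F ∅ = 0`), defined equivalently to the
sorted telescoping sum `f(x) = Σ_{j=1}^{N-1} F(S_j)(x_{i_j} - x_{i_{j+1}}) + F(V) x_{i_N}`
via the level-set integral formula. -/
noncomputable def lovasz {α : Type*} [Fintype α] (F : Set α → ℝ) (x : α → ℝ) : ℝ :=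
  (⨅ i, x i) * F Set.univ +
    ∫ t in Set.Ioc (⨅ i, x i) (⨆ i, x i), F {i | t < x i}

/-- `F(S₁) + F(S₂) ≥ F(S₁ ∪ S₂) + F(S₁ ∩ S₂)`. -/
def Submodular {α : Type*} (F : Set α → ℝ) : Prop :=
  ∀ A B : Set α, F (A ∪ B) + F (A ∩ B) ≤ F A + F B

/-!
Sort `x` decreasingly as `x (σ 0) ≥ ⋯ ≥ x (σ (N-1))` and let `S k = {σ 0, …, σ (k-1)}`. On each
gap between consecutive sorted values the level set `{i | t < x i}` is a fixed `S (k+1)`, so the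
level-set integral is the telescoping sum of the paper, and for a modular function
`A ↦ ∑ i ∈ A, s i` that sum is `⟨s, x⟩` by Abel summation. The greedy vector
`s (σ k) = F (S (k+1)) - F (S k)` agrees with `F` on the chain, so `f x = ⟨s, x⟩`; submodularity
gives `∑ i ∈ A, s i ≤ F A` for every `A`, hence `⟨s, y⟩ ≤ f y` for every `y`. Thus `f` is a
supremum of linear functions attained at every point, so it is convex.

Conversely, for `C ⊆ D` the vector `a • 1_D + b • 1_C` has level sets `D` on `(0, a)` and `C` on
`(a, a + b)`, so `f` takes the value `a * F D + b * F C` there. Since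
`1_A + 1_B = 1_(A ∪ B) + 1_(A ∩ B)`, convexity at the midpoint of `1_A` and `1_B` is exactly
submodularity.
-/

open Set

lemma intervalIntegral_eq_of_eqOn_Ioo {g : ℝ → ℝ} {a b c : ℝ} (hab : a ≤ b)
    (h : EqOn g (fun _ => c) (Ioo a b)) : ∫ t in a..b, g t = (b - a) * c := by
  rw [intervalIntegral.integral_of_le hab, integral_Ioc_eq_integral_Ioo,
    setIntegral_congr_fun measurableSet_Ioo h, setIntegral_const, Real.volume_real_Ioo_of_le hab,
    smul_eq_mul]

section LevelSets

variable {α : Type*} [Fintype α] (F : Set α → ℝ) (x : α → ℝ)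

lemma intervalIntegrable_levelSet (a b : ℝ) :
    IntervalIntegrable (fun t => F {i | t < x i}) volume a b := by
  obtain ⟨M, hM⟩ := (Set.finite_range fun A => ‖F A‖).bddAbove
  rw [intervalIntegrable_iff]
  refine Measure.integrableOn_of_bounded (M := M) measure_Ioc_lt_top.ne
    (by fun_prop : Measurable fun t => F {i | t < x i}).aestronglyMeasurable
    (Filter.Eventually.of_forall fun t => hM ⟨_, rfl⟩)

/-- The level sets are `univ` below `⨅ i, x i` and `∅` above `⨆ i, x i`. -/
lemma lovasz_eq_integral {F} (hF0 : F ∅ = 0) {a b : ℝ} (ha : a ≤ ⨅ i, x i) (hb : ⨆ i, x i ≤ b) :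
    lovasz F x = a * F univ + ∫ t in a..b, F {i | t < x i} := by
  have hle : (⨅ i, x i) ≤ ⨆ i, x i := by
    cases isEmpty_or_nonempty α
    · simp
    · exact ciInf_le_ciSup (Finite.bddBelow_range x) (Finite.bddAbove_range x)
  have hlow : ∫ t in a..⨅ i, x i, F {i | t < x i} = ((⨅ i, x i) - a) * F univ := by
    refine intervalIntegral_eq_of_eqOn_Ioo ha fun t ht => ?_
    dsimp only
    congr
    exact eq_univ_of_forall fun i => ht.2.trans_le (ciInf_le (Finite.bddBelow_range x) i)
  have hhigh : ∫ t in (⨆ i, x i)..b, F {i | t < x i} = 0 := by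
    rw [intervalIntegral_eq_of_eqOn_Ioo hb fun t ht => ?_, mul_zero]
    dsimp only
    convert hF0
    exact eq_empty_of_forall_notMem fun i hi =>
      (le_ciSup (Finite.bddAbove_range x) i).not_gt (ht.1.trans hi)
  rw [lovasz, ← intervalIntegral.integral_add_adjacent_intervals
      (intervalIntegrable_levelSet F x a (⨅ i, x i)) (intervalIntegrable_levelSet F x _ b),
    ← intervalIntegral.integral_add_adjacent_intervals
      (intervalIntegrable_levelSet F x _ (⨆ i, x i)) (intervalIntegrable_levelSet F x _ b),
    hlow, hhigh, intervalIntegral.integral_of_le hle]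
  ring

end LevelSets

section SortedChain

variable {N : ℕ} (x : Fin N → ℝ)

noncomputable def sortPerm : Equiv.Perm (Fin N) := Tuple.sort (-x)

/-- The `k`-th largest entry of `x` (counting from `0`), and `⨅ i, x i` once `N ≤ k`. -/
noncomputable def sortedVal (k : ℕ) : ℝ :=
  if h : k < N then x (sortPerm x ⟨k, h⟩) else ⨅ i, x i

/-- The indices of the `k` largest entries of `x` (the paper's `S_k`). -/
def chainSet (k : ℕ) : Set (Fin N) := {i | ((sortPerm x).symm i : ℕ) < k}

lemma sortPerm_antitone {j k : Fin N} (hjk : j ≤ k) : x (sortPerm x k) ≤ x (sortPerm x j) :=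
  neg_le_neg_iff.1 (Tuple.monotone_sort (-x) hjk)

lemma sortedVal_le_of_le {i : Fin N} {k : ℕ} (hk : ((sortPerm x).symm i : ℕ) ≤ k) :
    sortedVal x k ≤ x i := by
  unfold sortedVal
  split_ifs with h
  · simpa using sortPerm_antitone x (j := (sortPerm x).symm i) (k := ⟨k, h⟩) hk
  · exact ciInf_le (Finite.bddBelow_range x) i

lemma le_sortedVal_of_le {i : Fin N} {k : ℕ} (hk : k ≤ ((sortPerm x).symm i : ℕ)) :
    x i ≤ sortedVal x k := by
  have h : k < N := hk.trans_lt ((sortPerm x).symm i).isLt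
  rw [sortedVal, dif_pos h]
  simpa using sortPerm_antitone x (j := ⟨k, h⟩) (k := (sortPerm x).symm i) hk

lemma sortedVal_antitone : Antitone (sortedVal x) := by
  intro j k hjk
  by_cases hj : j < N
  · calc sortedVal x k ≤ x (sortPerm x ⟨j, hj⟩) := sortedVal_le_of_le x (by simpa using hjk)
      _ = sortedVal x j := by rw [sortedVal, dif_pos hj]
  · simp only [sortedVal, dif_neg hj, dif_neg (show ¬k < N by omega), le_refl]

lemma sortedVal_self : sortedVal x N = ⨅ i, x i := dif_neg (lt_irrefl N)

lemma iSup_le_sortedVal_zero : ⨆ i, x i ≤ sortedVal x 0 := by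
  cases isEmpty_or_nonempty (Fin N)
  · simp [sortedVal, Fin.pos_iff_nonempty, not_nonempty_iff.2 ‹_›]
  · exact ciSup_le fun i => le_sortedVal_of_le x (Nat.zero_le _)

lemma chainSet_zero : chainSet x 0 = ∅ := by simp [chainSet]

lemma chainSet_of_le {k : ℕ} (hk : N ≤ k) : chainSet x k = univ :=
  eq_univ_of_forall fun i => ((sortPerm x).symm i).isLt.trans_le hk

lemma chainSet_succ {k : ℕ} (hk : k < N) :
    chainSet x (k + 1) = insert (sortPerm x ⟨k, hk⟩) (chainSet x k) := by
  ext i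
  simp only [chainSet, mem_insert_iff, mem_ofPred_eq, ← Equiv.symm_apply_eq, Fin.ext_iff]
  omega

lemma sortPerm_notMem_chainSet {k : ℕ} (hk : k < N) : sortPerm x ⟨k, hk⟩ ∉ chainSet x k := by
  simp [chainSet]

lemma setOf_lt_eq_chainSet {k : ℕ} {t : ℝ}
    (ht : t ∈ Ioo (sortedVal x (k + 1)) (sortedVal x k)) : {i | t < x i} = chainSet x (k + 1) := by
  ext i
  simp only [mem_ofPred_eq, chainSet, Nat.lt_succ_iff]
  constructor
  · intro hti
    by_contra! hk
    exact (le_sortedVal_of_le x hk).not_gt (ht.1.trans hti)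
  · exact fun hk => ht.2.trans_le (sortedVal_le_of_le x hk)

end SortedChain

lemma sum_range_sub_mul_eq (c d : ℕ → ℝ) (n : ℕ) :
    ∑ k ∈ Finset.range n, (c (k + 1) - c k) * d k =
      ∑ k ∈ Finset.range n, c (k + 1) * (d k - d (k + 1)) + c n * d n - c 0 * d 0 := by
  induction n with
  | zero => simp
  | succ n ih => rw [Finset.sum_range_succ, Finset.sum_range_succ, ih]; ring

section LovaszSum

variable {N : ℕ}

/-- The paper's sorted telescoping sum, indexed from `0`: its extra summand `k = N - 1`
vanishes because `sortedVal x N = ⨅ i, x i = sortedVal x (N - 1)`. -/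
noncomputable def lovaszSum (G : Set (Fin N) → ℝ) (x : Fin N → ℝ) : ℝ :=
  ∑ k ∈ Finset.range N, G (chainSet x (k + 1)) * (sortedVal x k - sortedVal x (k + 1)) +
    G univ * sortedVal x N

lemma lovasz_eq_lovaszSum {F : Set (Fin N) → ℝ} (hF0 : F ∅ = 0) (x : Fin N → ℝ) :
    lovasz F x = lovaszSum F x := by
  have hpiece (k : ℕ) : ∫ t in sortedVal x (k + 1)..sortedVal x k, F {i | t < x i} =
      F (chainSet x (k + 1)) * (sortedVal x k - sortedVal x (k + 1)) := by
    rw [intervalIntegral_eq_of_eqOn_Ioo (sortedVal_antitone x k.le_succ)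
      fun t ht => congrArg F (setOf_lt_eq_chainSet x ht), mul_comm]
  rw [lovasz_eq_integral x hF0 (sortedVal_self x).le (iSup_le_sortedVal_zero x),
    intervalIntegral.integral_symm, ← intervalIntegral.sum_integral_adjacent_intervals
      fun k _ => intervalIntegrable_levelSet F x _ _, ← Finset.sum_neg_distrib]
  simp only [← intervalIntegral.integral_symm, hpiece, lovaszSum]
  ring

lemma lovaszSum_finsum (s x : Fin N → ℝ) :
    lovaszSum (fun A => ∑ᶠ i ∈ A, s i) x = ∑ i, s i * x i := by
  set c : ℕ → ℝ := fun k => ∑ᶠ i ∈ chainSet x k, s i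
  have hstep (k : Fin N) :
      (c (k + 1) - c k) * sortedVal x k = s (sortPerm x k) * x (sortPerm x k) := by
    rw [sortedVal, dif_pos k.isLt]
    simp only [c, chainSet_succ x k.isLt,
      finsum_mem_insert _ (sortPerm_notMem_chainSet x k.isLt) (toFinite _), add_sub_cancel_right]
  calc lovaszSum (fun A => ∑ᶠ i ∈ A, s i) x
      = ∑ k ∈ Finset.range N, (c (k + 1) - c k) * sortedVal x k := by
        rw [sum_range_sub_mul_eq]
        simp [lovaszSum, c, chainSet_zero, chainSet_of_le x le_rfl]
    _ = ∑ k : Fin N, s (sortPerm x k) * x (sortPerm x k) := by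
        rw [← Fin.sum_univ_eq_sum_range]
        exact Finset.sum_congr rfl fun k _ => hstep k
    _ = ∑ i, s i * x i := Equiv.sum_comp (sortPerm x) fun i => s i * x i

lemma lovaszSum_le_lovaszSum {G H : Set (Fin N) → ℝ} (x : Fin N → ℝ) (h : ∀ A, G A ≤ H A)
    (huniv : G univ = H univ) : lovaszSum G x ≤ lovaszSum H x := by
  unfold lovaszSum
  rw [huniv]
  gcongr with k
  · exact sub_nonneg.2 (sortedVal_antitone x k.le_succ)
  · exact h _

lemma lovaszSum_congr {G H : Set (Fin N) → ℝ} (x : Fin N → ℝ)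
    (h : ∀ k ≤ N, G (chainSet x k) = H (chainSet x k)) : lovaszSum G x = lovaszSum H x := by
  simp only [lovaszSum, ← chainSet_of_le x (le_refl N), h N le_rfl]
  congr 1
  exact Finset.sum_congr rfl fun k hk => by rw [h (k + 1) (Finset.mem_range.1 hk)]

end LovaszSum

section Greedy

variable {N : ℕ} {F : Set (Fin N) → ℝ}

/-- The vertex of the base polytope produced by Edmonds' greedy algorithm in the order of `x`. -/
noncomputable def greedyVector (F : Set (Fin N) → ℝ) (x : Fin N → ℝ) (i : Fin N) : ℝ :=
  F (chainSet x ((sortPerm x).symm i + 1)) - F (chainSet x ((sortPerm x).symm i))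

lemma greedyVector_sortPerm (x : Fin N → ℝ) {k : ℕ} (hk : k < N) :
    greedyVector F x (sortPerm x ⟨k, hk⟩) = F (chainSet x (k + 1)) - F (chainSet x k) := by
  simp [greedyVector]

lemma finsum_greedyVector_chainSet (hF0 : F ∅ = 0) (x : Fin N → ℝ) {k : ℕ} (hk : k ≤ N) :
    ∑ᶠ i ∈ chainSet x k, greedyVector F x i = F (chainSet x k) := by
  induction k with
  | zero => simp [chainSet_zero, hF0]
  | succ k ih =>
    have hk' : k < N := by omega
    rw [chainSet_succ x hk', finsum_mem_insert _ (sortPerm_notMem_chainSet x hk') (toFinite _),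
      ih hk'.le, greedyVector_sortPerm x hk', chainSet_succ x hk']
    ring

lemma finsum_greedyVector_univ (hF0 : F ∅ = 0) (x : Fin N → ℝ) :
    ∑ᶠ i ∈ univ, greedyVector F x i = F univ := by
  rw [← chainSet_of_le x le_rfl, finsum_greedyVector_chainSet hF0 x le_rfl]

lemma lovasz_eq_sum_greedyVector (hF0 : F ∅ = 0) (x : Fin N → ℝ) :
    lovasz F x = ∑ i, greedyVector F x i * x i := by
  rw [lovasz_eq_lovaszSum hF0, ← lovaszSum_finsum]
  exact lovaszSum_congr x fun k hk => (finsum_greedyVector_chainSet hF0 x hk).symm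

lemma Submodular.finsum_greedyVector_le (hF : Submodular F) (hF0 : F ∅ = 0) (x : Fin N → ℝ)
    (A : Set (Fin N)) : ∑ᶠ i ∈ A, greedyVector F x i ≤ F A := by
  suffices h : ∀ k ≤ N, ∑ᶠ i ∈ A ∩ chainSet x k, greedyVector F x i ≤ F (A ∩ chainSet x k) by
    simpa [chainSet_of_le x le_rfl] using h N le_rfl
  intro k hk
  induction k with
  | zero => simp [chainSet_zero, hF0]
  | succ k ih =>
    have hk' : k < N := by omega
    set a := sortPerm x ⟨k, hk'⟩
    have ha : a ∉ chainSet x k := sortPerm_notMem_chainSet x hk'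
    rw [chainSet_succ x hk']
    by_cases haA : a ∈ A
    · rw [inter_insert_of_mem haA, finsum_mem_insert _ (fun h => ha h.2) (toFinite _),
        greedyVector_sortPerm x hk']
      have hsub := hF (chainSet x k) (insert a (A ∩ chainSet x k))
      rw [union_insert, union_eq_self_of_subset_right inter_subset_right,
        inter_insert_of_notMem ha, inter_eq_right.2 inter_subset_right,
        ← chainSet_succ x hk'] at hsub
      linarith [ih hk'.le]
    · rw [inter_insert_of_notMem haA]
      exact ih hk'.le

lemma Submodular.sum_greedyVector_mul_le_lovasz (hF : Submodular F) (hF0 : F ∅ = 0)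
    (m x : Fin N → ℝ) : ∑ i, greedyVector F m i * x i ≤ lovasz F x := by
  rw [← lovaszSum_finsum, lovasz_eq_lovaszSum hF0]
  exact lovaszSum_le_lovaszSum x (hF.finsum_greedyVector_le hF0 m)
    (finsum_greedyVector_univ hF0 m)

theorem Submodular.convexOn_lovasz (hF : Submodular F) (hF0 : F ∅ = 0) :
    ConvexOn ℝ univ (lovasz F) := by
  refine ⟨convex_univ, fun x _ y _ a b ha hb _ => ?_⟩
  set g := greedyVector F (a • x + b • y)
  calc lovasz F (a • x + b • y) = a * ∑ i, g i * x i + b * ∑ i, g i * y i := by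
        rw [lovasz_eq_sum_greedyVector hF0, Finset.mul_sum, Finset.mul_sum,
          ← Finset.sum_add_distrib]
        refine Finset.sum_congr rfl fun i _ => ?_
        simp only [Pi.add_apply, Pi.smul_apply, smul_eq_mul]
        ring
    _ ≤ a • lovasz F x + b • lovasz F y := by
        simp only [smul_eq_mul]
        gcongr <;> exact hF.sum_greedyVector_mul_le_lovasz hF0 _ _

end Greedy

section Indicators

variable {α : Type*} [Fintype α] {F : Set α → ℝ}

lemma lovasz_smul_indicator_add_smul_indicator (hF0 : F ∅ = 0) {C D : Set α} (hCD : C ⊆ D)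
    {a b : ℝ} (ha : 0 ≤ a) (hb : 0 ≤ b) :
    lovasz F (a • D.indicator 1 + b • C.indicator 1) = a * F D + b * F C := by
  set x : α → ℝ := a • D.indicator 1 + b • C.indicator 1
  have hxC : ∀ i ∈ C, x i = a + b := fun i hi => by simp [x, hi, hCD hi]
  have hxD : ∀ i ∈ D, i ∉ C → x i = a := fun i hi hiC => by simp [x, hi, hiC]
  have hxD' : ∀ i ∉ D, x i = 0 := fun i hi => by
    have hiC : i ∉ C := fun h => hi (hCD h)
    simp [x, hi, hiC]
  have hx_mem : ∀ i, x i ∈ Icc 0 (a + b) := fun i => by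
    by_cases hiC : i ∈ C
    · rw [hxC i hiC]; constructor <;> linarith
    · by_cases hiD : i ∈ D
      · rw [hxD i hiD hiC]; constructor <;> linarith
      · rw [hxD' i hiD]; constructor <;> linarith
  have hlevel_D : EqOn (fun t => F {i | t < x i}) (fun _ => F D) (Ioo 0 a) := by
    intro t ht
    dsimp only
    congr 1
    ext i
    rw [mem_ofPred_eq]
    by_cases hiC : i ∈ C
    · simp only [hxC i hiC, hCD hiC, iff_true]; linarith [ht.2]
    · by_cases hiD : i ∈ D
      · simp only [hxD i hiD hiC, hiD, iff_true]; exact ht.2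
      · simp only [hxD' i hiD, hiD, iff_false, not_lt]; exact ht.1.le
  have hlevel_C : EqOn (fun t => F {i | t < x i}) (fun _ => F C) (Ioo a (a + b)) := by
    intro t ht
    dsimp only
    congr 1
    ext i
    rw [mem_ofPred_eq]
    by_cases hiC : i ∈ C
    · simp only [hxC i hiC, hiC, iff_true]; exact ht.2
    · simp only [hiC, iff_false, not_lt]
      by_cases hiD : i ∈ D
      · rw [hxD i hiD hiC]; exact ht.1.le
      · rw [hxD' i hiD]; linarith [ht.1]
  rw [lovasz_eq_integral x hF0 (Real.iInf_nonneg fun i => (hx_mem i).1)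
      (Real.iSup_le (fun i => (hx_mem i).2) (by positivity)),
    ← intervalIntegral.integral_add_adjacent_intervals (intervalIntegrable_levelSet F x 0 a)
      (intervalIntegrable_levelSet F x a (a + b)),
    intervalIntegral_eq_of_eqOn_Ioo ha hlevel_D,
    intervalIntegral_eq_of_eqOn_Ioo (by linarith) hlevel_C]
  ring

lemma lovasz_indicator (hF0 : F ∅ = 0) (A : Set α) : lovasz F (A.indicator 1) = F A := by
  simpa using lovasz_smul_indicator_add_smul_indicator hF0 (subset_refl A) zero_le_one le_rfl

theorem Submodular.of_convexOn_lovasz (hF0 : F ∅ = 0) (hconv : ConvexOn ℝ univ (lovasz F)) :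
    Submodular F := by
  intro A B
  have hmid : (1 / 2 : ℝ) • A.indicator 1 + (1 / 2 : ℝ) • B.indicator 1 =
      (1 / 2 : ℝ) • (A ∪ B).indicator (1 : α → ℝ) + (1 / 2 : ℝ) • (A ∩ B).indicator 1 := by
    ext i
    simp only [Pi.add_apply, Pi.smul_apply, ← smul_add, indicator_union_add_inter_apply]
  have h := hconv.2 (mem_univ (A.indicator 1)) (mem_univ (B.indicator 1))
    (by norm_num : (0 : ℝ) ≤ 1 / 2) (by norm_num : (0 : ℝ) ≤ 1 / 2) (by norm_num)
  rw [hmid, lovasz_smul_indicator_add_smul_indicator hF0 (inter_subset_left.trans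
    subset_union_left) (by norm_num) (by norm_num), lovasz_indicator hF0,
    lovasz_indicator hF0, smul_eq_mul, smul_eq_mul] at h
  linarith

end Indicators

/-- A set function `F : 2^V → ℝ` with `F(∅) = 0` is submodular if and only if its Lovász
extension is convex. -/
theorem stmt_0 {N : ℕ} (F : Set (Fin N) → ℝ) (hF0 : F ∅ = 0) :
    Submodular F ↔ ConvexOn ℝ Set.univ (lovasz F) :=
  ⟨fun hF => hF.convexOn_lovasz hF0, Submodular.of_convexOn_lovasz hF0⟩
end

section
/- Let e ⊆ V be a hyperedge with edge-dependent vertex weights γ_e : V → ℝ_{≥0} (positive on e, zero off e), and let γ_e(S) = Σ_{v∈S} γ_e(v). If g_e : [0, γ_e(e)] → ℝ_{≥0} is concave, symmetric about γ_e(e)/2, and satisfies g_e(0) = 0, and h_e(κ(e)) > 0, then the function w_e(S) = h_e(κ(e)) · g_e(γ_e(S)) on 2^e is non-negative, submodular, symmetric (w_e(S) = w_e(e\S)), and satisfies w_e(∅) = 0. -/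
open Finset

/-! On subsets of `e`, `w = c · (g ∘ γ)` with `γ` modular and monotone. Since
`γ(S₁ ∩ S₂) ≤ γ(S₁), γ(S₂) ≤ γ(S₁ ∪ S₂)` and `γ(S₁ ∩ S₂) + γ(S₁ ∪ S₂) = γ(S₁) + γ(S₂)`,
submodularity is the fact that a concave function gains when two points of an interval are moved
symmetrically towards each other. Symmetry of `w` is the symmetry of `g`, and non-negativity comes
from concavity, because `g` vanishes at both ends `0` and `γ(e)` of its domain. -/

section Concave

variable {𝕜 β : Type*} [Field 𝕜] [LinearOrder 𝕜] [IsStrictOrderedRing 𝕜] [AddCommGroup β]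
  [Module 𝕜 β] {f : 𝕜 → β}

theorem ConcaveOn.add_le_add_of_mem_Icc [PartialOrder β] [IsOrderedAddMonoid β] {s : Set 𝕜}
    (hf : ConcaveOn 𝕜 s f) {x y z : 𝕜} (hx : x ∈ s) (hy : y ∈ s)
    (hz : z ∈ Set.Icc x y) : f x + f y ≤ f z + f (x + y - z) := by
  rcases (hz.1.trans hz.2).eq_or_lt with rfl | hxy
  · obtain rfl : z = x := le_antisymm hz.2 hz.1
    simp
  -- `z`, `x + y - z` are the convex combinations of `x, y` with weights `(t, 1 - t)`, `(1 - t, t)`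
  set t := (y - z) / (y - x)
  have ht : t * (y - x) = y - z := div_mul_cancel₀ _ (sub_pos.2 hxy).ne'
  have ht0 : 0 ≤ t := div_nonneg (sub_nonneg.2 hz.2) (sub_pos.2 hxy).le
  have ht1 : 0 ≤ 1 - t := sub_nonneg.2 ((div_le_one (sub_pos.2 hxy)).2 (by linarith [hz.1]))
  have hfz : t • f x + (1 - t) • f y ≤ f z := by
    convert hf.2 hx hy ht0 ht1 (add_sub_cancel t 1) using 2
    simp only [smul_eq_mul]
    linear_combination ht
  have hfz' : (1 - t) • f x + t • f y ≤ f (x + y - z) := by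
    convert hf.2 hx hy ht1 ht0 (sub_add_cancel 1 t) using 2
    simp only [smul_eq_mul]
    linear_combination -ht
  calc f x + f y = (t • f x + (1 - t) • f y) + ((1 - t) • f x + t • f y) := by module
    _ ≤ f z + f (x + y - z) := add_le_add hfz hfz'

theorem ConcaveOn.nonneg_of_mem_Icc [LinearOrder β] [IsOrderedAddMonoid β]
    [IsStrictOrderedModule 𝕜 β] {a b : 𝕜} (hf : ConcaveOn 𝕜 (Set.Icc a b) f) (hab : a ≤ b)
    (ha : 0 ≤ f a) (hb : 0 ≤ f b) {x : 𝕜} (hx : x ∈ Set.Icc a b) : 0 ≤ f x :=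
  (le_min ha hb).trans <|
    hf.min_le_of_mem_Icc (Set.left_mem_Icc.2 hab) (Set.right_mem_Icc.2 hab) hx

end Concave

section Modular

variable {ι : Type*} {γ : ι → ℝ} {e : Finset ι}

theorem Finset.sum_mem_Icc_of_subset (hγ : ∀ v ∈ e, 0 ≤ γ v) {S : Finset ι} (hS : S ⊆ e) :
    ∑ v ∈ S, γ v ∈ Set.Icc 0 (∑ v ∈ e, γ v) :=
  ⟨sum_nonneg fun v hv => hγ v (hS hv),
    sum_le_sum_of_subset_of_nonneg hS fun v hv _ => hγ v hv⟩

theorem ConcaveOn.map_sum_union_add_map_sum_inter_le [DecidableEq ι] {g : ℝ → ℝ}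
    (hg : ConcaveOn ℝ (Set.Icc 0 (∑ v ∈ e, γ v)) g) (hγ : ∀ v ∈ e, 0 ≤ γ v) {S₁ S₂ : Finset ι}
    (h₁ : S₁ ⊆ e) (h₂ : S₂ ⊆ e) :
    g (∑ v ∈ S₁ ∪ S₂, γ v) + g (∑ v ∈ S₁ ∩ S₂, γ v) ≤ g (∑ v ∈ S₁, γ v) + g (∑ v ∈ S₂, γ v) := by
  have hinter : ∑ v ∈ S₁ ∩ S₂, γ v ≤ ∑ v ∈ S₁, γ v :=
    sum_le_sum_of_subset_of_nonneg inter_subset_left fun v hv _ => hγ v (h₁ hv)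
  have hunion : ∑ v ∈ S₁, γ v ≤ ∑ v ∈ S₁ ∪ S₂, γ v :=
    sum_le_sum_of_subset_of_nonneg subset_union_left fun v hv _ => hγ v (union_subset h₁ h₂ hv)
  have hspread := hg.add_le_add_of_mem_Icc
    (sum_mem_Icc_of_subset hγ (inter_subset_left.trans h₁))
    (sum_mem_Icc_of_subset hγ (union_subset h₁ h₂)) ⟨hinter, hunion⟩
  have hsum : ∑ v ∈ S₁ ∩ S₂, γ v + ∑ v ∈ S₁ ∪ S₂, γ v - ∑ v ∈ S₁, γ v = ∑ v ∈ S₂, γ v := by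
    linarith [sum_union_inter (s₁ := S₁) (s₂ := S₂) (f := γ)]
  rwa [add_comm, hsum] at hspread

end Modular

theorem stmt_4_general {V : Type*} [DecidableEq V] (e : Finset V) (γ : V → ℝ)
    (hpos : ∀ v ∈ e, 0 < γ v)
    (g : ℝ → ℝ)
    (hconc : ConcaveOn ℝ (Set.Icc 0 (∑ v ∈ e, γ v)) g)
    (hgsym : ∀ x ∈ Set.Icc 0 (∑ v ∈ e, γ v), g x = g ((∑ v ∈ e, γ v) - x))
    (hg0 : g 0 = 0)
    (c : ℝ) (hc : 0 < c) :
    let w : Finset V → ℝ := fun S => c * g (∑ v ∈ S, γ v)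
    (∀ S ⊆ e, 0 ≤ w S) ∧
    (∀ S₁ ⊆ e, ∀ S₂ ⊆ e, w (S₁ ∪ S₂) + w (S₁ ∩ S₂) ≤ w S₁ + w S₂) ∧
    (∀ S ⊆ e, w S = w (e \ S)) ∧
    w ∅ = 0 := by
  intro w
  have hγ : ∀ v ∈ e, 0 ≤ γ v := fun v hv => (hpos v hv).le
  have htotal : 0 ≤ ∑ v ∈ e, γ v := sum_nonneg hγ
  have hg_total : g (∑ v ∈ e, γ v) = 0 := by
    simpa [hg0] using (hgsym 0 ⟨le_rfl, htotal⟩).symm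
  refine ⟨fun S hS => ?_, fun S₁ h₁ S₂ h₂ => ?_, fun S hS => ?_, by simp [w, hg0]⟩
  · exact mul_nonneg hc.le <| hconc.nonneg_of_mem_Icc htotal hg0.ge hg_total.ge
      (sum_mem_Icc_of_subset hγ hS)
  · simp only [w, ← mul_add]
    exact mul_le_mul_of_nonneg_left (hconc.map_sum_union_add_map_sum_inter_le hγ h₁ h₂) hc.le
  · simp only [w]
    rw [sum_sdiff_eq_sub hS, ← hgsym _ (sum_mem_Icc_of_subset hγ hS)]

/-- For EDVW `γ` on a hyperedge `e`, a concave symmetric `g` with `g 0 = 0` that is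
non-negative on `[0, γ(e)]`, and a positive factor `c = h_e(κ(e))`, the splitting function
`w(S) = c · g(γ(S))` is non-negative, submodular, symmetric and vanishes at `∅`. -/
theorem stmt_4 {V : Type*} [Fintype V] [DecidableEq V] (e : Finset V) (γ : V → ℝ)
    (hpos : ∀ v ∈ e, 0 < γ v) (hzero : ∀ v ∉ e, γ v = 0)
    (g : ℝ → ℝ)
    (hconc : ConcaveOn ℝ (Set.Icc 0 (∑ v ∈ e, γ v)) g)
    (hgnn : ∀ x ∈ Set.Icc 0 (∑ v ∈ e, γ v), 0 ≤ g x)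
    (hgsym : ∀ x ∈ Set.Icc 0 (∑ v ∈ e, γ v), g x = g ((∑ v ∈ e, γ v) - x))
    (hg0 : g 0 = 0)
    (c : ℝ) (hc : 0 < c) :
    let w : Finset V → ℝ := fun S => c * g (∑ v ∈ S, γ v)
    (∀ S ⊆ e, 0 ≤ w S) ∧
    (∀ S₁ ⊆ e, ∀ S₂ ⊆ e, w (S₁ ∪ S₂) + w (S₁ ∩ S₂) ≤ w S₁ + w S₂) ∧
    (∀ S ⊆ e, w S = w (e \ S)) ∧
    w ∅ = 0 :=
  stmt_4_general e γ hpos g hconc hgsym hg0 c hc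
end

section
/- For γ_e(v) > 0 on e and β > 0, the function w_e(S) = κ(e) · min{γ_e(S), γ_e(e) − γ_e(S), β·γ_e(e)} is a valid splitting function: non-negative, submodular, symmetric, and vanishing at the empty set. -/
open scoped Classical

private lemma min3_submod (T B x y p q : ℝ) (hxp : x ≤ p) (hpy : p ≤ y)
    (hxq : x ≤ q) (hqy : q ≤ y) (hsum : p + q = x + y) :
    min (min y (T - y)) B + min (min x (T - x)) B ≤
      min (min p (T - p)) B + min (min q (T - q)) B := by
  have hx1 : min (min x (T - x)) B ≤ x := le_trans (min_le_left _ _) (min_le_left _ _)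
  have hx2 : min (min x (T - x)) B ≤ T - x := le_trans (min_le_left _ _) (min_le_right _ _)
  have hx3 : min (min x (T - x)) B ≤ B := min_le_right _ _
  have hy1 : min (min y (T - y)) B ≤ y := le_trans (min_le_left _ _) (min_le_left _ _)
  have hy2 : min (min y (T - y)) B ≤ T - y := le_trans (min_le_left _ _) (min_le_right _ _)
  have hy3 : min (min y (T - y)) B ≤ B := min_le_right _ _
  rcases min_cases (min p (T - p)) B with ⟨h1, _⟩ | ⟨h1, _⟩ <;>
    rcases min_cases p (T - p) with ⟨h2, _⟩ | ⟨h2, _⟩ <;>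
    rcases min_cases (min q (T - q)) B with ⟨h3, _⟩ | ⟨h3, _⟩ <;>
    rcases min_cases q (T - q) with ⟨h4, _⟩ | ⟨h4, _⟩ <;>
    rw [h1, h3] <;> first
      | (rw [h2, h4]; linarith)
      | (rw [h2]; linarith)
      | (rw [h4]; linarith)
      | linarith

/-- For positive EDVW `γ` on a hyperedge `e`, `κ > 0` and `β > 0`, the function
`w(S) = κ · min{γ(S), γ(e) − γ(S), β·γ(e)}` is a valid splitting function:
non-negative, submodular, symmetric, and vanishing at the empty set. -/
theorem stmt_5 {V : Type*} [Fintype V] [DecidableEq V] (e : Finset V) (γ : V → ℝ)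
    (hpos : ∀ v ∈ e, 0 < γ v) (κ β : ℝ) (hκ : 0 < κ) (hβ : 0 < β) :
    let w : Finset V → ℝ := fun S =>
      κ * min (min (∑ v ∈ S, γ v) ((∑ v ∈ e, γ v) - ∑ v ∈ S, γ v)) (β * ∑ v ∈ e, γ v)
    (∀ S ⊆ e, 0 ≤ w S) ∧
    (∀ S₁ ⊆ e, ∀ S₂ ⊆ e, w (S₁ ∪ S₂) + w (S₁ ∩ S₂) ≤ w S₁ + w S₂) ∧
    (∀ S ⊆ e, w S = w (e \ S)) ∧
    w ∅ = 0 := by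
  intro w
  have hT : (0:ℝ) ≤ ∑ v ∈ e, γ v :=
    Finset.sum_nonneg fun v hv => (hpos v hv).le
  have hsub : ∀ S ⊆ e, (∑ v ∈ S, γ v) ≤ ∑ v ∈ e, γ v := fun S hS =>
    Finset.sum_le_sum_of_subset_of_nonneg hS fun v hv _ => (hpos v hv).le
  have hnn : ∀ S ⊆ e, (0:ℝ) ≤ ∑ v ∈ S, γ v := fun S hS =>
    Finset.sum_nonneg fun v hv => (hpos v (hS hv)).le
  refine ⟨?_, ?_, ?_, ?_⟩
  · intro S hS
    apply mul_nonneg hκ.le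
    exact le_min (le_min (hnn S hS) (by linarith [hsub S hS])) (mul_nonneg hβ.le hT)
  · intro S₁ h₁ S₂ h₂
    have hUe : S₁ ∪ S₂ ⊆ e := Finset.union_subset h₁ h₂
    have hIe : S₁ ∩ S₂ ⊆ e := le_trans (Finset.inter_subset_left) h₁
    have hI1 : (∑ v ∈ S₁ ∩ S₂, γ v) ≤ ∑ v ∈ S₁, γ v :=
      Finset.sum_le_sum_of_subset_of_nonneg Finset.inter_subset_left
        fun v hv _ => (hpos v (h₁ hv)).le
    have hI2 : (∑ v ∈ S₁ ∩ S₂, γ v) ≤ ∑ v ∈ S₂, γ v :=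
      Finset.sum_le_sum_of_subset_of_nonneg Finset.inter_subset_right
        fun v hv _ => (hpos v (h₂ hv)).le
    have hU1 : (∑ v ∈ S₁, γ v) ≤ ∑ v ∈ S₁ ∪ S₂, γ v :=
      Finset.sum_le_sum_of_subset_of_nonneg Finset.subset_union_left
        fun v hv _ => (hpos v (hUe hv)).le
    have hU2 : (∑ v ∈ S₂, γ v) ≤ ∑ v ∈ S₁ ∪ S₂, γ v :=
      Finset.sum_le_sum_of_subset_of_nonneg Finset.subset_union_right
        fun v hv _ => (hpos v (hUe hv)).le
    have hsum : (∑ v ∈ S₁, γ v) + (∑ v ∈ S₂, γ v)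
        = (∑ v ∈ S₁ ∩ S₂, γ v) + (∑ v ∈ S₁ ∪ S₂, γ v) := by
      rw [← Finset.sum_union_inter]; ring
    have key := min3_submod (∑ v ∈ e, γ v) (β * ∑ v ∈ e, γ v)
      (∑ v ∈ S₁ ∩ S₂, γ v) (∑ v ∈ S₁ ∪ S₂, γ v)
      (∑ v ∈ S₁, γ v) (∑ v ∈ S₂, γ v) hI1 hU1 hI2 hU2 (by linarith)
    show κ * _ + κ * _ ≤ κ * _ + κ * _
    rw [← mul_add, ← mul_add]
    exact mul_le_mul_of_nonneg_left key hκ.le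
  · intro S hS
    have h : (∑ v ∈ e \ S, γ v) = (∑ v ∈ e, γ v) - ∑ v ∈ S, γ v := by
      have := Finset.sum_sdiff (f := γ) hS
      linarith
    show κ * _ = κ * _
    rw [h, sub_sub_cancel, min_comm (∑ v ∈ S, γ v)]
  · show κ * _ = 0
    rw [Finset.sum_empty, sub_zero]
    rw [min_eq_left hT, min_eq_left (mul_nonneg hβ.le hT), mul_zero]
end

section
/- Let G : 2^{V∪V̄} → ℝ be submodular with G(∅) = 0, where V and V̄ are disjoint. Then the set function F : 2^V → ℝ defined by F(S) = min_{T⊆V̄} G(S∪T) − min_{T⊆V̄} G(T) is submodular and satisfies F(∅) = 0. -/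
open scoped Classical
open MeasureTheory

/-- For submodular `G` on `2^(V ∪ V̄)` with `G ∅ = 0`, the partial-minimization
`F(S) = min_{T ⊆ V̄} G(S ∪ T) − min_{T ⊆ V̄} G(T)` is submodular with `F ∅ = 0`. -/
theorem stmt_6 {α β : Type*} [Fintype α] [Fintype β] (G : Set (α ⊕ β) → ℝ)
    (hG : Submodular G) (hG0 : G ∅ = 0) :
    let F : Set α → ℝ := fun S =>
      (⨅ T : Set β, G (Sum.inl '' S ∪ Sum.inr '' T)) - ⨅ T : Set β, G (Sum.inr '' T)
    Submodular F ∧ F ∅ = 0 := by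
  intro F
  have hbdd : ∀ f : Set β → ℝ, BddBelow (Set.range f) := fun f => (Set.finite_range f).bddBelow
  have hmin : ∀ S : Set α, ∃ T : Set β,
      (⨅ T' : Set β, G (Sum.inl '' S ∪ Sum.inr '' T')) = G (Sum.inl '' S ∪ Sum.inr '' T) := by
    intro S
    obtain ⟨T, hT⟩ := Finite.exists_min (fun T : Set β => G (Sum.inl '' S ∪ Sum.inr '' T))
    exact ⟨T, le_antisymm (ciInf_le (hbdd _) T) (le_ciInf hT)⟩
  constructor
  · intro A B
    obtain ⟨TA, hTA⟩ := hmin A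
    obtain ⟨TB, hTB⟩ := hmin B
    have key := hG (Sum.inl '' A ∪ Sum.inr '' TA) (Sum.inl '' B ∪ Sum.inr '' TB)
    have hu : (Sum.inl '' A ∪ Sum.inr '' TA) ∪ (Sum.inl '' B ∪ Sum.inr '' TB)
        = Sum.inl '' (A ∪ B) ∪ Sum.inr '' (TA ∪ TB) := by
      ext x; cases x <;> simp <;> tauto
    have hi : (Sum.inl '' A ∪ Sum.inr '' TA) ∩ (Sum.inl '' B ∪ Sum.inr '' TB)
        = Sum.inl '' (A ∩ B) ∪ Sum.inr '' (TA ∩ TB) := by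
      ext x; cases x <;> simp <;> tauto
    rw [hu, hi] at key
    have h1 : (⨅ T' : Set β, G (Sum.inl '' (A ∪ B) ∪ Sum.inr '' T'))
        ≤ G (Sum.inl '' (A ∪ B) ∪ Sum.inr '' (TA ∪ TB)) := ciInf_le (hbdd _) _
    have h2 : (⨅ T' : Set β, G (Sum.inl '' (A ∩ B) ∪ Sum.inr '' T'))
        ≤ G (Sum.inl '' (A ∩ B) ∪ Sum.inr '' (TA ∩ TB)) := ciInf_le (hbdd _) _
    simp only [F]
    rw [hTA, hTB]
    linarith
  · show (⨅ T : Set β, G (Sum.inl '' (∅:Set α) ∪ Sum.inr '' T)) - _ = 0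
    simp
end

section
/- Let G : 2^{V∪V̄} → ℝ be submodular with G(∅) = 0 and min_{T⊆V̄} G(T) = 0. Define F(S) = min_{T⊆V̄} G(S∪T) for S ⊆ V. Then for all x ∈ ℝ^N with non-negative entries, the Lovász extension f of F satisfies f(x) = min_{x̄ ∈ ℝ^M_{≥0}} g(x, x̄), where g is the Lovász extension of G and (x, x̄) denotes the concatenated vector on V∪V̄ with |V| = N, |V̄| = M. -/
/-!
For `x ≥ 0` and any `C ≥ max x`, the Lovász extension is the integral over `t ∈ (0, C]` of the
set function at the level set `{x > t}`. The level set of `(x, x̄)` at `t` is `S_t ∪ T_t` with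
`S_t = {x > t}`, and `G (S_t ∪ T_t) ≥ F S_t`; this gives `f x ≤ g (x, x̄)` for every `x̄ ≥ 0`.
Conversely, submodularity makes the minimisers of `T ↦ G (S ∪ T)` closed under union, so there is
a largest one `T* S`, and comparing `G` at `(S, T* S)` and `(S', T* S')` shows that `T*` is
monotone. Since `S_t` decreases in `t`, setting `x̄ j = sup {t | j ∈ T* S_t}` makes the level sets
of `x̄` equal to `T* S_t`, so `g (x, x̄) = f x`.
-/

open scoped Classical
open MeasureTheory

open Filter Topology Set

section LevelSets

variable {γ : Type*}

lemma measurable_levelSet (x : γ → ℝ) : Measurable fun t => {i | t < x i} :=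
  measurable_set_iff.2 fun _ => measurableSet_setOfPred.1 measurableSet_Iio

lemma eventually_levelSet_eq [Finite γ] (x : γ → ℝ) (t : ℝ) :
    ∀ᶠ s in 𝓝[>] t, {i | s < x i} = {i | t < x i} := by
  have : ∀ i, ∀ᶠ s in 𝓝[>] t, (s < x i ↔ t < x i) := by
    intro i
    by_cases h : t < x i
    · filter_upwards [nhdsWithin_le_nhds (Iio_mem_nhds h)] with s hs
      exact iff_of_true hs h
    · filter_upwards [self_mem_nhdsWithin] with s hs
      exact iff_of_false (fun hsx => h ((mem_Ioi.1 hs).trans hsx)) h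
  filter_upwards [eventually_all.2 this] with s hs
  ext i; exact hs i

variable [Fintype γ]

lemma integrableOn_comp_levelSet (F : Set γ → ℝ) (x : γ → ℝ) (a b : ℝ) :
    IntegrableOn (fun t => F {i | t < x i}) (Ioc a b) := by
  obtain ⟨M, hM⟩ := (finite_range fun S => ‖F S‖).bddAbove
  exact Measure.integrableOn_of_bounded (M := M) measure_Ioc_lt_top.ne
    ((measurable_of_finite F).comp (measurable_levelSet x)).aestronglyMeasurable
    (Eventually.of_forall fun _ => hM ⟨_, rfl⟩)

lemma lovasz_eq_setIntegral (F : Set γ → ℝ) (hF0 : F ∅ = 0) {x : γ → ℝ} (hx : ∀ i, 0 ≤ x i)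
    {C : ℝ} (hC : ∀ i, x i ≤ C) (hC0 : 0 ≤ C) :
    lovasz F x = ∫ t in Ioc 0 C, F {i | t < x i} := by
  set a := ⨅ i, x i
  set b := ⨆ i, x i
  have hax : ∀ i, a ≤ x i := ciInf_le (finite_range x).bddBelow
  have hxb : ∀ i, x i ≤ b := le_ciSup (finite_range x).bddAbove
  have ha : 0 ≤ a := Real.iInf_nonneg hx
  have hbC : b ≤ C := Real.iSup_le hC hC0
  have hab : a ≤ b := by
    rcases isEmpty_or_nonempty γ with hγ | ⟨⟨i⟩⟩
    · simp [a, b]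
    · exact (hax i).trans (hxb i)
  have hbelow : ∫ t in Ioc 0 a, F {i | t < x i} = a * F univ := by
    rw [integral_Ioc_eq_integral_Ioo, setIntegral_congr_fun measurableSet_Ioo
      (g := fun _ => F univ) fun t ht =>
        congrArg F (eq_univ_of_forall (s := {i | t < x i}) fun i => ht.2.trans_le (hax i))]
    simp [ha]
  have habove : ∫ t in Ioc b C, F {i | t < x i} = 0 :=
    setIntegral_eq_zero_of_forall_eq_zero fun t ht => by
      rw [eq_empty_of_forall_notMem (s := {i | t < x i})
        fun i hi => (not_lt.2 ((hxb i).trans ht.1.le)) hi, hF0]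
  have I := integrableOn_comp_levelSet F x
  rw [← Ioc_union_Ioc_eq_Ioc ha (hab.trans hbC),
    setIntegral_union (Ioc_disjoint_Ioc_of_le le_rfl) measurableSet_Ioc (I _ _) (I _ _),
    ← Ioc_union_Ioc_eq_Ioc hab hbC,
    setIntegral_union (Ioc_disjoint_Ioc_of_le le_rfl) measurableSet_Ioc (I _ _) (I _ _),
    hbelow, habove, lovasz]
  ring

end LevelSets

section Sum

variable {α β : Type*}

lemma image_inl_union_image_inr_union (S S' : Set α) (T T' : Set β) :
    (Sum.inl '' S ∪ Sum.inr '' T) ∪ (Sum.inl '' S' ∪ Sum.inr '' T')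
      = Sum.inl '' (S ∪ S') ∪ Sum.inr '' (T ∪ T') := by
  ext (_ | _) <;> simp

lemma image_inl_union_image_inr_inter (S S' : Set α) (T T' : Set β) :
    (Sum.inl '' S ∪ Sum.inr '' T) ∩ (Sum.inl '' S' ∪ Sum.inr '' T')
      = Sum.inl '' (S ∩ S') ∪ Sum.inr '' (T ∩ T') := by
  ext (_ | _) <;> simp

lemma setOf_lt_sumElim (x : α → ℝ) (y : β → ℝ) (t : ℝ) :
    {z | t < Sum.elim x y z} = Sum.inl '' {i | t < x i} ∪ Sum.inr '' {j | t < y j} := by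
  ext (_ | _) <;> simp

variable [Finite β] (G : Set (α ⊕ β) → ℝ)

noncomputable def partialInf (S : Set α) : ℝ := ⨅ T : Set β, G (Sum.inl '' S ∪ Sum.inr '' T)

lemma partialInf_le (S : Set α) (T : Set β) : partialInf G S ≤ G (Sum.inl '' S ∪ Sum.inr '' T) :=
  ciInf_le (finite_range _).bddBelow T

def minimizers (S : Set α) : Set (Set β) :=
  {T | G (Sum.inl '' S ∪ Sum.inr '' T) = partialInf G S}

lemma minimizers_nonempty (S : Set α) : (minimizers G S).Nonempty := by
  obtain ⟨T, hT⟩ := Finite.exists_min fun T : Set β => G (Sum.inl '' S ∪ Sum.inr '' T)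
  exact ⟨T, (partialInf_le G S T).antisymm' (le_ciInf hT)⟩

variable {G}

lemma supClosed_minimizers (hG : Submodular G) (S : Set α) : SupClosed (minimizers G S) := by
  intro T (hT : G _ = _) T' (hT' : G _ = _)
  have h := hG (Sum.inl '' S ∪ Sum.inr '' T) (Sum.inl '' S ∪ Sum.inr '' T')
  rw [image_inl_union_image_inr_union, image_inl_union_image_inr_inter, union_self,
    inter_self] at h
  have := partialInf_le G S (T ∩ T')
  show G (Sum.inl '' S ∪ Sum.inr '' (T ∪ T')) = _
  exact (partialInf_le G S _).antisymm' (by linarith)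

variable (G)

noncomputable def maxMinimizer (S : Set α) : Set β := sSup (minimizers G S)

variable {G}

lemma maxMinimizer_mem (hG : Submodular G) (S : Set α) : maxMinimizer G S ∈ minimizers G S :=
  (supClosed_minimizers hG S).sSup_mem_of_nonempty (toFinite _) (minimizers_nonempty G S) le_rfl

lemma maxMinimizer_mono (hG : Submodular G) : Monotone (maxMinimizer G) := by
  intro S S' hS
  have h := hG (Sum.inl '' S ∪ Sum.inr '' maxMinimizer G S)
    (Sum.inl '' S' ∪ Sum.inr '' maxMinimizer G S')
  rw [image_inl_union_image_inr_union, image_inl_union_image_inr_inter, union_eq_right.2 hS,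
    inter_eq_left.2 hS, maxMinimizer_mem hG S, maxMinimizer_mem hG S'] at h
  have := partialInf_le G S (maxMinimizer G S ∩ maxMinimizer G S')
  have hmin : maxMinimizer G S ∪ maxMinimizer G S' ∈ minimizers G S' :=
    (partialInf_le G S' _).antisymm' (by linarith)
  exact subset_union_left.trans (le_sSup hmin)

end Sum

lemma setOf_lt_sSup_eq {β : Type*} {U : ℝ → Set β} (hU : Antitone U) {C t : ℝ} (ht : 0 < t)
    (htC : t < C) (hright : ∀ᶠ s in 𝓝[>] t, U s = U t) :
    {j | t < sSup {s ∈ Ioc 0 C | j ∈ U s}} = U t := by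
  ext j
  constructor
  · intro (h : t < sSup _)
    rcases eq_empty_or_nonempty {s ∈ Ioc 0 C | j ∈ U s} with he | hne
    · rw [he, Real.sSup_empty] at h
      exact (lt_asymm ht h).elim
    · obtain ⟨s, ⟨-, hs⟩, hts⟩ := exists_lt_of_lt_csSup hne h
      exact hU hts.le hs
  · intro hj
    obtain ⟨s, ⟨hsU, hsC⟩, hts⟩ :=
      ((hright.and (nhdsWithin_le_nhds (Iio_mem_nhds htC))).and self_mem_nhdsWithin).exists
    exact (mem_Ioi.1 hts).trans_le
      (le_csSup (s := {s ∈ Ioc 0 C | j ∈ U s}) ⟨C, fun _ h => h.1.2⟩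
        ⟨⟨ht.trans hts, hsC.le⟩, hsU ▸ hj⟩)

section Lovasz

variable {α β : Type*} [Fintype α] [Fintype β] {G : Set (α ⊕ β) → ℝ}

lemma lovasz_partialInf_le (hG0 : G ∅ = 0) (hF0 : partialInf G ∅ = 0) {x : α → ℝ}
    (hx : ∀ i, 0 ≤ x i) {y : β → ℝ} (hy : ∀ j, 0 ≤ y j) :
    lovasz (partialInf G) x ≤ lovasz G (Sum.elim x y) := by
  have hxy : ∀ z, 0 ≤ Sum.elim x y z := by rintro (i | j); exacts [hx i, hy j]
  set C := ∑ z, Sum.elim x y z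
  have hC : ∀ z, Sum.elim x y z ≤ C := fun z =>
    Finset.single_le_sum (fun z _ => hxy z) (Finset.mem_univ z)
  have hC0 : 0 ≤ C := Finset.sum_nonneg fun z _ => hxy z
  rw [lovasz_eq_setIntegral _ hF0 hx (fun i => hC (.inl i)) hC0,
    lovasz_eq_setIntegral _ hG0 hxy hC hC0]
  refine setIntegral_mono_on (integrableOn_comp_levelSet _ _ _ _)
    (integrableOn_comp_levelSet _ _ _ _) measurableSet_Ioc fun t _ => ?_
  rw [setOf_lt_sumElim]
  exact partialInf_le G _ _

lemma exists_lovasz_sumElim_eq (hG : Submodular G) (hG0 : G ∅ = 0) (hF0 : partialInf G ∅ = 0)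
    {x : α → ℝ} (hx : ∀ i, 0 ≤ x i) :
    ∃ y : β → ℝ, (∀ j, 0 ≤ y j) ∧ lovasz G (Sum.elim x y) = lovasz (partialInf G) x := by
  set C := ∑ i, x i
  have hC : ∀ i, x i ≤ C := fun i => Finset.single_le_sum (fun i _ => hx i) (Finset.mem_univ i)
  have hC0 : 0 ≤ C := Finset.sum_nonneg fun i _ => hx i
  set U : ℝ → Set β := fun t => maxMinimizer G {i | t < x i}
  have hU : Antitone U := fun s t hst => maxMinimizer_mono hG fun i hi => hst.trans_lt hi
  -- `y j` is the last level `t` at which `j` still lies in the largest minimiser for `S_t`.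
  set y : β → ℝ := fun j => sSup {s ∈ Ioc 0 C | j ∈ U s}
  have hy0 : ∀ j, 0 ≤ y j := fun j => Real.sSup_nonneg fun s hs => hs.1.1.le
  have hyC : ∀ j, y j ≤ C := fun j => Real.sSup_le (fun s hs => hs.1.2) hC0
  have hxy : ∀ z, 0 ≤ Sum.elim x y z := by rintro (i | j); exacts [hx i, hy0 j]
  have hxyC : ∀ z, Sum.elim x y z ≤ C := by rintro (i | j); exacts [hC i, hyC j]
  refine ⟨y, hy0, ?_⟩
  rw [lovasz_eq_setIntegral _ hG0 hxy hxyC hC0, lovasz_eq_setIntegral _ hF0 hx hC hC0,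
    integral_Ioc_eq_integral_Ioo, integral_Ioc_eq_integral_Ioo]
  refine setIntegral_congr_fun measurableSet_Ioo fun t ht => ?_
  have hright : ∀ᶠ s in 𝓝[>] t, U s = U t := by
    filter_upwards [eventually_levelSet_eq x t] with s hs
    simp only [U, hs]
  rw [setOf_lt_sumElim, setOf_lt_sSup_eq hU ht.1 ht.2 hright]
  exact maxMinimizer_mem hG _

end Lovasz

/-- If `G` is submodular, `G ∅ = 0` and `min_{T ⊆ V̄} G(T) = 0`, then the Lovász extension of
`F(S) = min_{T ⊆ V̄} G(S ∪ T)` satisfies `f(x) = min_{x̄ ≥ 0} g(x, x̄)` for all `x ≥ 0`. -/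
theorem stmt_7 {α β : Type*} [Fintype α] [Fintype β] (G : Set (α ⊕ β) → ℝ)
    (hG : Submodular G) (hG0 : G ∅ = 0)
    (hmin : (⨅ T : Set β, G (Sum.inr '' T)) = 0)
    (x : α → ℝ) (hx : ∀ i, 0 ≤ x i) :
    lovasz (fun S : Set α => ⨅ T : Set β, G (Sum.inl '' S ∪ Sum.inr '' T)) x
      = ⨅ xb : {xb : β → ℝ // ∀ j, 0 ≤ xb j}, lovasz G (Sum.elim x xb.1) := by
  have hF0 : partialInf G ∅ = 0 := by simpa [partialInf] using hmin
  obtain ⟨y, hy, hyeq⟩ := exists_lovasz_sumElim_eq hG hG0 hF0 hx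
  have : Nonempty {xb : β → ℝ // ∀ j, 0 ≤ xb j} := ⟨⟨y, hy⟩⟩
  refine (IsGLB.ciInf_eq (IsLeast.isGLB ⟨⟨⟨y, hy⟩, hyeq⟩, ?_⟩)).symm
  rintro _ ⟨⟨y', hy'⟩, rfl⟩
  exact lovasz_partialInf_le hG0 hF0 hx hy'
end

section
/- Let G : 2^{V∪V̄} → ℝ be submodular, non-negative, with G(∅) = 0 and G(V∪V̄) = 0, and let g be its Lovász extension. Fix x ∈ ℝ^N with minimum entry a and maximum entry b. Then for any x̄ ∈ ℝ^M, g(x, x̄) ≥ g(x, P_{a,b}(x̄)), where P_{a,b} clips every entry of x̄ to the interval [a, b]. Consequently min over x̄ ∈ ℝ^M of g(x, x̄) equals the min over x̄ ∈ [a,b]^M. -/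
open scoped Classical
open MeasureTheory

/-!
With `G univ = 0` the Lovász extension is just `∫_{min y}^{max y} G {i | t < y i} dt`. Clipping
the coordinates of `y` to `[a, b]` (with `min y ≤ a ≤ b ≤ max y`) leaves every level set
`{i | t < y i}` with `t ∈ (a, b)` unchanged and shrinks the range of integration to `(a, b]`;
since `G ≥ 0`, the integral can only decrease. When the fixed block `x` already spans `[a, b]`,
clipping `x̄` is exactly such a clipping of `(x, x̄)`.
-/

open Set

section Lovasz

variable {γ : Type*} [Fintype γ]

lemma integrableOn_levelSet (G : Set γ → ℝ) (y : γ → ℝ) (c d : ℝ) :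
    IntegrableOn (fun t => G {i | t < y i}) (Ioc c d) := by
  have hlevel : Measurable fun t : ℝ => ({i | t < y i} : Set γ) :=
    measurable_pi_lambda _ fun i => (measurableSet_Iio (a := y i)).mem
  have hG : Measurable G := Measurable.of_discrete
  refine Measure.integrableOn_of_bounded (M := ∑ S, |G S|) measure_Ioc_lt_top.ne
    (hG.comp hlevel).aestronglyMeasurable (Filter.Eventually.of_forall fun t => ?_)
  exact Finset.single_le_sum (f := fun S => |G S|) (fun S _ => abs_nonneg _) (Finset.mem_univ _)

lemma lovasz_eq_setIntegral_s8 {G : Set γ → ℝ} (hGV : G univ = 0) (y : γ → ℝ) :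
    lovasz G y = ∫ t in Ioc (⨅ i, y i) (⨆ i, y i), G {i | t < y i} := by
  rw [lovasz, hGV, mul_zero, zero_add]

lemma lovasz_nonneg {G : Set γ → ℝ} (hGnn : ∀ S, 0 ≤ G S) (hGV : G univ = 0) (y : γ → ℝ) :
    0 ≤ lovasz G y := by
  rw [lovasz_eq_setIntegral_s8 hGV]
  exact setIntegral_nonneg measurableSet_Ioc fun t _ => hGnn _

lemma lt_max_min_iff {a b t v : ℝ} (hat : a ≤ t) (htb : t < b) :
    t < max a (min b v) ↔ t < v := by
  rw [lt_max_iff, lt_min_iff]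
  constructor
  · rintro (h | h)
    exacts [absurd h hat.not_gt, h.2]
  · exact fun h => Or.inr ⟨htb, h⟩

lemma ciInf_max_min [Nonempty γ] {a b : ℝ} (hab : a ≤ b) {y : γ → ℝ} (ha : ⨅ i, y i ≤ a) :
    ⨅ i, max a (min b (y i)) = a := by
  obtain ⟨i₀, hi₀⟩ := exists_eq_ciInf_of_finite (f := y)
  refine le_antisymm ((ciInf_le (Finite.bddBelow_range _) i₀).trans ?_)
    (le_ciInf fun i => le_max_left _ _)
  rw [hi₀, min_eq_right (ha.trans hab), max_eq_left ha]

lemma ciSup_max_min [Nonempty γ] {a b : ℝ} (hab : a ≤ b) {y : γ → ℝ} (hb : b ≤ ⨆ i, y i) :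
    ⨆ i, max a (min b (y i)) = b := by
  obtain ⟨i₀, hi₀⟩ := exists_eq_ciSup_of_finite (f := y)
  refine le_antisymm (ciSup_le fun i => max_le hab (min_le_left _ _))
    (le_trans ?_ (le_ciSup (Finite.bddAbove_range _) i₀))
  rw [hi₀, min_eq_left hb, max_eq_right hab]

theorem lovasz_max_min_le [Nonempty γ] {G : Set γ → ℝ} (hGnn : ∀ S, 0 ≤ G S)
    (hGV : G univ = 0) {a b : ℝ} (hab : a ≤ b) {y : γ → ℝ} (ha : ⨅ i, y i ≤ a)
    (hb : b ≤ ⨆ i, y i) :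
    lovasz G (fun i => max a (min b (y i))) ≤ lovasz G y := by
  have hlevel : ∀ t ∈ Ioo a b, {i | t < max a (min b (y i))} = {i | t < y i} :=
    fun t ht => by ext i; exact lt_max_min_iff ht.1.le ht.2
  calc lovasz G (fun i => max a (min b (y i)))
      = ∫ t in Ioc a b, G {i | t < max a (min b (y i))} := by
        rw [lovasz_eq_setIntegral_s8 hGV, ciInf_max_min hab ha, ciSup_max_min hab hb]
    _ = ∫ t in Ioc a b, G {i | t < y i} := by
        simp only [← setIntegral_congr_set (Ioo_ae_eq_Ioc (a := a) (b := b))]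
        exact setIntegral_congr_fun measurableSet_Ioo fun t ht => by rw [hlevel t ht]
    _ ≤ ∫ t in Ioc (⨅ i, y i) (⨆ i, y i), G {i | t < y i} :=
        setIntegral_mono_set (integrableOn_levelSet G y _ _)
          (Filter.Eventually.of_forall fun t => hGnn _) (Ioc_subset_Ioc ha hb).eventuallyLE
    _ = lovasz G y := (lovasz_eq_setIntegral_s8 hGV y).symm

end Lovasz

theorem ciInf_eq_ciInf_subtype_of_le {ι α : Type*} [Nonempty ι] [ConditionallyCompleteLattice α]
    {p : ι → Prop} {f : ι → α} (hf : BddBelow (range f)) (r : ι → ι) (hr : ∀ i, p (r i))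
    (hle : ∀ i, f (r i) ≤ f i) :
    ⨅ i, f i = ⨅ i : Subtype p, f i := by
  have : Nonempty (Subtype p) := ⟨⟨r (Classical.arbitrary ι), hr _⟩⟩
  have hf' : BddBelow (range fun i : Subtype p => f i) :=
    hf.mono (range_subset_iff.2 fun i => mem_range_self i.1)
  exact le_antisymm (le_ciInf fun i => ciInf_le hf i.1)
    (le_ciInf fun i => (ciInf_le hf' ⟨r i, hr i⟩).trans (hle i))

theorem stmt_8_general {α β : Type*} [Fintype α] [Fintype β] [Nonempty α] (G : Set (α ⊕ β) → ℝ)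
    (hGnn : ∀ S, 0 ≤ G S) (hGV : G Set.univ = 0)
    (x : α → ℝ) (a b : ℝ) (ha : a = ⨅ i, x i) (hb : b = ⨆ i, x i) :
    (∀ xb : β → ℝ,
      lovasz G (Sum.elim x fun j => max a (min b (xb j))) ≤ lovasz G (Sum.elim x xb)) ∧
    (⨅ xb : β → ℝ, lovasz G (Sum.elim x xb))
      = ⨅ xb : {xb : β → ℝ // ∀ j, xb j ∈ Set.Icc a b}, lovasz G (Sum.elim x xb.1) := by
  have hax : ∀ i, a ≤ x i := fun i => ha ▸ ciInf_le (Finite.bddBelow_range x) i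
  have hxb : ∀ i, x i ≤ b := fun i => hb ▸ le_ciSup (Finite.bddAbove_range x) i
  have hab : a ≤ b := (hax (Classical.arbitrary α)).trans (hxb _)
  have clip : ∀ xb : β → ℝ,
      lovasz G (Sum.elim x fun j => max a (min b (xb j))) ≤ lovasz G (Sum.elim x xb) := by
    intro xb
    have hclip : Sum.elim x (fun j => max a (min b (xb j)))
        = fun i => max a (min b (Sum.elim x xb i)) := by
      ext (i | j)
      · simp [min_eq_right (hxb i), max_eq_right (hax i)]
      · rfl
    rw [hclip]
    refine lovasz_max_min_le hGnn hGV hab ?_ ?_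
    · exact ha ▸ le_ciInf fun i => ciInf_le (Finite.bddBelow_range _) (Sum.inl i)
    · exact hb ▸ ciSup_le fun i => le_ciSup (Finite.bddAbove_range (Sum.elim x xb)) (Sum.inl i)
  refine ⟨clip, ciInf_eq_ciInf_subtype_of_le ⟨0, ?_⟩ _ ?_ clip⟩
  · rintro _ ⟨xb, rfl⟩
    exact lovasz_nonneg hGnn hGV _
  · exact fun xb j => ⟨le_max_left _ _, max_le hab (min_le_left _ _)⟩

/-- Clipping lemma: for submodular, non-negative `G` with `G ∅ = 0` and `G(V ∪ V̄) = 0`, and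
`x` with minimum entry `a` and maximum entry `b`, clipping the auxiliary part `x̄` to `[a,b]`
does not increase the Lovász extension; hence the min over `ℝ^M` equals the min over `[a,b]^M`. -/
theorem stmt_8 {α β : Type*} [Fintype α] [Fintype β] [Nonempty α] (G : Set (α ⊕ β) → ℝ)
    (hG : Submodular G) (hGnn : ∀ S, 0 ≤ G S) (hG0 : G ∅ = 0) (hGV : G Set.univ = 0)
    (x : α → ℝ) (a b : ℝ) (ha : a = ⨅ i, x i) (hb : b = ⨆ i, x i) :
    (∀ xb : β → ℝ,
      lovasz G (Sum.elim x fun j => max a (min b (xb j))) ≤ lovasz G (Sum.elim x xb)) ∧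
    (⨅ xb : β → ℝ, lovasz G (Sum.elim x xb))
      = ⨅ xb : {xb : β → ℝ // ∀ j, xb j ∈ Set.Icc a b}, lovasz G (Sum.elim x xb.1) :=
  stmt_8_general G hGnn hGV x a b ha hb
end

section
/- If a submodular hypergraph H on V is reducible to a directed graph G on V∪V̄ (i.e., Q_1(x) = min_{x̄} Q_1^{(g)}(x, x̄) for all x), then the solution to min over ‖x‖_∞ ≤ 1 of Q_1(x) − λ⟨x, g⟩ is obtained as x = y_V, where y solves min over ‖y‖_∞ ≤ 1 of Q_1^{(g)}(y) − ⟨y, g̃⟩, with g̃_V = λg and g̃_{V̄} = 0. -/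
open scoped Classical

noncomputable def clampR (t : ℝ) : ℝ := max (-1) (min 1 t)

lemma clampR_abs_le (t : ℝ) : |clampR t| ≤ 1 := by
  rw [abs_le]
  exact ⟨le_max_left _ _, max_le (by norm_num) (min_le_left _ _)⟩

lemma clampR_eq (t : ℝ) (h : |t| ≤ 1) : clampR t = t := by
  rw [abs_le] at h
  unfold clampR
  rw [min_eq_right h.2, max_eq_right h.1]

lemma clampR_sub_le (a b : ℝ) : clampR a - clampR b ≤ max (a - b) 0 := by
  unfold clampR
  rw [max_def, min_def, max_def, min_def, max_def]
  split_ifs <;> linarith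

/-- If a submodular hypergraph with Lovász-extended cut `Q₁` is reducible to a directed graph
with non-negative weights `A` (i.e. `Q₁(x) = min_{x̄} Q₁⁽ᵍ⁾(x, x̄)` for all `x`), then any
minimizer `y` of `Q₁⁽ᵍ⁾(y) − ⟨y, g̃⟩` over the `‖·‖_∞`-unit ball (with `g̃_V = λ·g`,
`g̃_{V̄} = 0`) restricts to a minimizer `x = y_V` of `Q₁(x) − λ⟨x, g⟩` over the
`‖·‖_∞`-unit ball. -/
theorem stmt_15 {α β : Type*} [Fintype α] [Fintype β]
    (A : (α ⊕ β) → (α ⊕ β) → ℝ) (hA : ∀ u v, 0 ≤ A u v)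
    (Q1 : (α → ℝ) → ℝ) (g : α → ℝ) (lam : ℝ)
    (hred : ∀ x : α → ℝ,
      Q1 x = ⨅ xb : β → ℝ,
        ∑ u, ∑ v, A u v * max (Sum.elim x xb u - Sum.elim x xb v) 0)
    (y : (α ⊕ β) → ℝ) (hy : ∀ u, |y u| ≤ 1)
    (hymin : ∀ z : (α ⊕ β) → ℝ, (∀ u, |z u| ≤ 1) →
      (∑ u, ∑ v, A u v * max (y u - y v) 0)
          - ∑ u, y u * Sum.elim (fun i => lam * g i) (fun _ => (0 : ℝ)) u
        ≤ (∑ u, ∑ v, A u v * max (z u - z v) 0)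
          - ∑ u, z u * Sum.elim (fun i => lam * g i) (fun _ => (0 : ℝ)) u) :
    (∀ i, |y (Sum.inl i)| ≤ 1) ∧
    ∀ x : α → ℝ, (∀ i, |x i| ≤ 1) →
      Q1 (fun i => y (Sum.inl i)) - lam * ∑ i, y (Sum.inl i) * g i
        ≤ Q1 x - lam * ∑ i, x i * g i := by
  classical
  set gt : (α ⊕ β) → ℝ := Sum.elim (fun i => lam * g i) (fun _ => (0 : ℝ)) with hgt
  set F : ((α ⊕ β) → ℝ) → ℝ := fun z => ∑ u, ∑ v, A u v * max (z u - z v) 0 with hFdef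
  have hF0 : ∀ z, 0 ≤ F z := by
    intro z
    apply Finset.sum_nonneg; intro u _
    apply Finset.sum_nonneg; intro v _
    exact mul_nonneg (hA u v) (le_max_right _ _)
  have hip : ∀ z : (α ⊕ β) → ℝ, ∑ u, z u * gt u = lam * ∑ i, z (Sum.inl i) * g i := by
    intro z
    rw [Fintype.sum_sum_type, Finset.mul_sum]
    simp only [hgt, Sum.elim_inl, Sum.elim_inr, mul_zero, Finset.sum_const_zero, add_zero]
    exact Finset.sum_congr rfl fun i _ => by ring
  refine ⟨fun i => hy _, ?_⟩
  intro x hx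
  -- Q1 (y_V) ≤ F y
  have hyel : Sum.elim (fun i => y (Sum.inl i)) (fun j => y (Sum.inr j)) = y :=
    funext fun u => by cases u <;> rfl
  have hQy : Q1 (fun i => y (Sum.inl i)) ≤ F y := by
    rw [hred]
    have := ciInf_le (f := fun xb : β → ℝ =>
        ∑ u, ∑ v, A u v * max (Sum.elim (fun i => y (Sum.inl i)) xb u
          - Sum.elim (fun i => y (Sum.inl i)) xb v) 0)
      (c := fun j => y (Sum.inr j))
      ⟨0, by rintro w ⟨xb, rfl⟩; exact hF0 _⟩
    rw [hyel] at this
    exact this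
  apply le_of_forall_pos_le_add
  intro ε hε
  -- get near-minimizer xb for x
  have hlt : (⨅ xb : β → ℝ,
      ∑ u, ∑ v, A u v * max (Sum.elim x xb u - Sum.elim x xb v) 0) < Q1 x + ε := by
    rw [← hred]; linarith
  obtain ⟨xb, hxb⟩ := exists_lt_of_ciInf_lt hlt
  set w : (α ⊕ β) → ℝ := Sum.elim x xb with hw
  set z : (α ⊕ β) → ℝ := Sum.elim x (fun j => clampR (xb j)) with hz
  have hzb : ∀ u, |z u| ≤ 1 := by
    intro u; cases u with
    | inl i => exact hx i
    | inr j => exact clampR_abs_le _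
  have hzw : ∀ u, z u = clampR (w u) := by
    intro u; cases u with
    | inl i => simp [hz, hw, clampR_eq _ (hx i)]
    | inr j => simp [hz, hw]
  have hFzw : F z ≤ F w := by
    apply Finset.sum_le_sum; intro u _
    apply Finset.sum_le_sum; intro v _
    apply mul_le_mul_of_nonneg_left _ (hA u v)
    rw [hzw u, hzw v]
    exact max_le (clampR_sub_le _ _) (le_max_right _ _)
  have hmin := hymin z hzb
  have hipz : ∑ u, z u * gt u = lam * ∑ i, x i * g i := by
    rw [hip]; rfl
  have hipy : ∑ u, y u * gt u = lam * ∑ i, y (Sum.inl i) * g i := hip y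
  have hFw : F w < Q1 x + ε := hxb
  calc Q1 (fun i => y (Sum.inl i)) - lam * ∑ i, y (Sum.inl i) * g i
      ≤ F y - ∑ u, y u * gt u := by rw [hipy]; linarith
    _ ≤ F z - ∑ u, z u * gt u := hmin
    _ = F z - lam * ∑ i, x i * g i := by rw [hipz]
    _ ≤ F w - lam * ∑ i, x i * g i := by linarith
    _ ≤ Q1 x - lam * ∑ i, x i * g i + ε := by linarith
end

section
/- For a directed graph with non-negative weights A, the Lovász extension of the cut function admits the variational representation Q_1^{(g)}(y) = max over α ∈ [0,1]^{Ẽ} with α_{uv} + α_{vu} = 1 of Σ_{(u,v)∈Ẽ} A_{uv}(y_u − y_v)α_{uv} = max of ⟨y, f_A(α)⟩, where [f_A(α)]_u = Σ_{v:(u,v)∈Ẽ} (A_{uv}α_{uv} − A_{vu}α_{vu}) and Ẽ contains ordered pairs (u,v) with A_{uv} > 0 or A_{vu} > 0. -/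
open scoped Classical

/-- Variational representation of the Lovász extension of the directed-graph cut function:
`Q₁⁽ᵍ⁾(y) = max_{α ∈ [0,1], α_{uv} + α_{vu} = 1} Σ_{u,v} A_{uv}(y_u − y_v)α_{uv}
= max ⟨y, f_A(α)⟩`, where `[f_A(α)]_u = Σ_v (A_{uv}α_{uv} − A_{vu}α_{vu})`. -/
theorem stmt_16 {γ : Type*} [Fintype γ] (A : γ → γ → ℝ) (hA : ∀ u v, 0 ≤ A u v)
    (y : γ → ℝ) :
    (∑ u, ∑ v, A u v * max (y u - y v) 0)
      = (⨆ a : {a : γ → γ → ℝ // ∀ u v, a u v ∈ Set.Icc (0 : ℝ) 1 ∧ a u v + a v u = 1},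
          ∑ u, ∑ v, A u v * (y u - y v) * a.1 u v) ∧
    (∑ u, ∑ v, A u v * max (y u - y v) 0)
      = ⨆ a : {a : γ → γ → ℝ // ∀ u v, a u v ∈ Set.Icc (0 : ℝ) 1 ∧ a u v + a v u = 1},
          ∑ u, y u * ∑ v, (A u v * a.1 u v - A v u * a.1 v u) := by
  set T := {a : γ → γ → ℝ // ∀ u v, a u v ∈ Set.Icc (0 : ℝ) 1 ∧ a u v + a v u = 1}
  -- the optimal α
  set α₀ : γ → γ → ℝ := fun u v =>
    if y u - y v > 0 then 1 else if y u - y v < 0 then 0 else 1/2 with hα₀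
  have hα₀mem : ∀ u v, α₀ u v ∈ Set.Icc (0 : ℝ) 1 ∧ α₀ u v + α₀ v u = 1 := by
    intro u v
    simp only [hα₀]
    rcases lt_trichotomy (y u - y v) 0 with h | h | h
    · have h' : y v - y u > 0 := by linarith
      constructor
      · simp [not_lt.2 h.le, h, Set.mem_Icc]
      · simp [not_lt.2 h.le, h, h']
    · have h' : y v - y u = 0 := by linarith
      constructor
      · norm_num [h, h', Set.mem_Icc]
      · norm_num [h, h']
    · have h' : y v - y u < 0 := by linarith
      constructor
      · simp [h, Set.mem_Icc]
      · simp [h, not_lt.2 h'.le, h']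
  have key : ∀ u v, A u v * (y u - y v) * α₀ u v = A u v * max (y u - y v) 0 := by
    intro u v
    simp only [hα₀]
    rcases lt_trichotomy (y u - y v) 0 with h | h | h
    · simp [not_lt.2 h.le, h, max_eq_right h.le]
    · simp [h]
    · simp [h, max_eq_left h.le]
  -- nonempty index type
  have hne : Nonempty T := ⟨⟨α₀, hα₀mem⟩⟩
  -- upper bound
  have hub : ∀ a : T, (∑ u, ∑ v, A u v * (y u - y v) * a.1 u v)
      ≤ ∑ u, ∑ v, A u v * max (y u - y v) 0 := by
    intro a
    refine Finset.sum_le_sum fun u _ => Finset.sum_le_sum fun v _ => ?_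
    obtain ⟨⟨h0, h1⟩, _⟩ := a.2 u v
    rcases le_or_gt (y u - y v) 0 with h | h
    · rw [max_eq_right h]
      have : A u v * (y u - y v) ≤ 0 := mul_nonpos_of_nonneg_of_nonpos (hA u v) h
      nlinarith
    · rw [max_eq_left h.le]
      calc A u v * (y u - y v) * a.1 u v
          ≤ A u v * (y u - y v) * 1 :=
            mul_le_mul_of_nonneg_left h1 (mul_nonneg (hA u v) h.le)
        _ = A u v * (y u - y v) := mul_one _
  have hbdd : BddAbove (Set.range fun a : T =>
      ∑ u, ∑ v, A u v * (y u - y v) * a.1 u v) :=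
    ⟨_, by rintro _ ⟨a, rfl⟩; exact hub a⟩
  have h1 : (∑ u, ∑ v, A u v * max (y u - y v) 0)
      = ⨆ a : T, ∑ u, ∑ v, A u v * (y u - y v) * a.1 u v := by
    refine le_antisymm ?_ (ciSup_le hub)
    have := le_ciSup hbdd (⟨α₀, hα₀mem⟩ : T)
    calc (∑ u, ∑ v, A u v * max (y u - y v) 0)
        = ∑ u, ∑ v, A u v * (y u - y v) * α₀ u v := by
          exact Finset.sum_congr rfl fun u _ => Finset.sum_congr rfl fun v _ => (key u v).symm
      _ ≤ _ := this
  have hswap : ∀ a : T, (∑ u, y u * ∑ v, (A u v * a.1 u v - A v u * a.1 v u))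
      = ∑ u, ∑ v, A u v * (y u - y v) * a.1 u v := by
    intro a
    have : ∀ u, y u * ∑ v, (A u v * a.1 u v - A v u * a.1 v u)
        = ∑ v, (y u * (A u v * a.1 u v) - y u * (A v u * a.1 v u)) := by
      intro u
      rw [Finset.mul_sum]
      exact Finset.sum_congr rfl fun v _ => by ring
    simp_rw [this, Finset.sum_sub_distrib]
    rw [Finset.sum_comm (f := fun u v => y u * (A v u * a.1 v u))]
    rw [← Finset.sum_sub_distrib]
    simp_rw [← Finset.sum_sub_distrib]
    exact Finset.sum_congr rfl fun u _ => Finset.sum_congr rfl fun v _ => by ring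
  refine ⟨h1, ?_⟩
  rw [h1]
  exact congrArg iSup (funext fun a => (hswap a).symm)
end

section
/- The dual of the problem min over ‖y‖_2 ≤ 1 of Q_1^{(g)}(y) − ⟨y, g̃⟩ is min over α ∈ [0,1]^m with α_{uv}+α_{vu}=1 of ‖f_A(α) − g̃‖_2^2 (up to squaring the objective), and an optimal primal solution is given by y = −(f_A(α*) − g̃)/‖f_A(α*) − g̃‖_2 when f_A(α*) ≠ g̃; in particular min_{‖y‖_2≤1} (Q_1^{(g)}(y) − ⟨y, g̃⟩) = − min_α ‖f_A(α) − g̃‖_2. -/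
open scoped Classical

/-- The Euclidean (`ℓ₂`) norm of a finitely supported real vector. -/
noncomputable def enorm2 {γ : Type*} [Fintype γ] (v : γ → ℝ) : ℝ :=
  Real.sqrt (∑ u, v u ^ 2)

/-!
`Q₁⁽ᵍ⁾` is the support function of the convex set `K = {f_A(α)}`: pairing `y` with `f_A(α)` and
summing by parts gives `Σ A_{uv} α_{uv} (y_u − y_v) ≤ Q₁⁽ᵍ⁾(y)`, with equality for the splitting
that puts all the weight of each edge on its ascending orientation. Hence by Cauchy–Schwarz every
`y` in the unit ball has value at least `−‖f_A(α) − g̃‖₂`. Conversely, if `p = f_A(α*)` is the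
point of `K` nearest to `g̃`, the projection inequality `⟪g̃ − p, k − p⟫ ≤ 0` on `K` says that the
unit vector `y* = (g̃ − p)/‖g̃ − p‖` satisfies `⟪y*, k − g̃⟫ ≤ −‖p − g̃‖` for every `k ∈ K`, so
`y*` attains the lower bound.
-/

open scoped InnerProductSpace

section SupportFunction

variable {E : Type*} [NormedAddCommGroup E] [InnerProductSpace ℝ E]

theorem neg_norm_sub_le_of_inner_le {y k g : E} {q : ℝ} (hk : ⟪y, k⟫_ℝ ≤ q) (hy : ‖y‖ ≤ 1) :
    -‖k - g‖ ≤ q - ⟪y, g⟫_ℝ :=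
  calc -‖k - g‖ ≤ -(‖y‖ * ‖k - g‖) := neg_le_neg (mul_le_of_le_one_left (norm_nonneg _) hy)
    _ ≤ ⟪y, k - g⟫_ℝ := neg_le_of_abs_le (abs_real_inner_le_norm y (k - g))
    _ ≤ q - ⟪y, g⟫_ℝ := by rw [inner_sub_right]; linarith

theorem inner_neg_smul_sub_le_neg_norm_of_isMinOn {K : Set E} (hK : Convex ℝ K) {p g : E}
    (hp : p ∈ K) (hmin : IsMinOn (fun k => ‖k - g‖) K p) {k : E} (hk : k ∈ K) :
    ⟪-(‖p - g‖⁻¹ • (p - g)), k - g⟫_ℝ ≤ -‖p - g‖ := by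
  have hproj : ‖g - p‖ = ⨅ w : K, ‖g - w‖ := by
    simp_rw [norm_sub_rev g]
    exact (hmin.iInf_eq hp).symm
  have hvar : ⟪g - p, k - p⟫_ℝ ≤ 0 := (norm_eq_iInf_iff_real_inner_le_zero hK hp).mp hproj k hk
  have hsplit : ⟪p - g, k - g⟫_ℝ = ‖p - g‖ ^ 2 - ⟪g - p, k - p⟫_ℝ := by
    rw [← real_inner_self_eq_norm_sq, ← neg_sub p g, inner_neg_left, sub_neg_eq_add,
      ← inner_add_right]
    congr 1
    abel
  have hN : ‖p - g‖⁻¹ * ‖p - g‖ ^ 2 = ‖p - g‖ := by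
    rw [sq, ← mul_assoc, inv_mul_mul_self]
  rw [inner_neg_left, real_inner_smul_left, hsplit, mul_sub, hN]
  nlinarith [inv_nonneg.mpr (norm_nonneg (p - g))]

end SupportFunction

section DirectedTotalVariation

variable {γ : Type*}

-- Ranging over all ordered pairs, this forces `a u u = 1/2` and leaves the pairs with
-- `A u v = A v u = 0` as free dummies, so it parametrizes the paper's `α` on `Ẽ`.
def IsSplitting (a : γ → γ → ℝ) : Prop :=
  ∀ u v, a u v ∈ Set.Icc (0 : ℝ) 1 ∧ a u v + a v u = 1

theorem convex_setOf_isSplitting : Convex ℝ {a : γ → γ → ℝ | IsSplitting a} := by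
  intro a ha b hb s t hs ht hst u v
  obtain ⟨⟨ha0, ha1⟩, ha2⟩ := ha u v
  obtain ⟨⟨hb0, hb1⟩, hb2⟩ := hb u v
  simp only [Pi.add_apply, Pi.smul_apply, smul_eq_mul]
  refine ⟨⟨by positivity, by nlinarith⟩, by linear_combination s * ha2 + t * hb2 + hst⟩

theorem isCompact_setOf_isSplitting : IsCompact {a : γ → γ → ℝ | IsSplitting a} := by
  have hclosed : IsClosed {a : γ → γ → ℝ | IsSplitting a} := by
    simp only [IsSplitting, Set.ofPred_forall, Set.ofPred_and]
    exact isClosed_iInter fun u => isClosed_iInter fun v =>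
      (isClosed_Icc.preimage (by fun_prop)).inter (isClosed_eq (by fun_prop) continuous_const)
  exact (isCompact_univ_pi fun _ => isCompact_univ_pi fun _ => isCompact_Icc).of_isClosed_subset
    hclosed fun a ha u _ v _ => (ha u v).1

variable [Fintype γ]

def netFlow (A a : γ → γ → ℝ) (u : γ) : ℝ :=
  ∑ v, (A u v * a u v - A v u * a v u)

def directedTV (A : γ → γ → ℝ) (y : γ → ℝ) : ℝ :=
  ∑ u, ∑ v, A u v * max (y u - y v) 0

theorem isLinearMap_netFlow (A : γ → γ → ℝ) : IsLinearMap ℝ (netFlow A) where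
  map_add a b := by
    ext u
    simp only [netFlow, Pi.add_apply, ← Finset.sum_add_distrib]
    exact Finset.sum_congr rfl fun v _ => by ring
  map_smul c a := by
    ext u
    simp only [netFlow, Pi.smul_apply, smul_eq_mul, Finset.mul_sum]
    exact Finset.sum_congr rfl fun v _ => by ring

theorem sum_mul_netFlow (A a : γ → γ → ℝ) (y : γ → ℝ) :
    ∑ u, y u * netFlow A a u = ∑ u, ∑ v, A u v * a u v * (y u - y v) := by
  simp only [netFlow, Finset.mul_sum, mul_sub, Finset.sum_sub_distrib]
  rw [Finset.sum_comm (f := fun u v => y u * (A v u * a v u))]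
  simp only [← Finset.sum_sub_distrib]
  refine Finset.sum_congr rfl fun u _ => Finset.sum_congr rfl fun v _ => by ring

theorem sum_mul_netFlow_le_directedTV {A a : γ → γ → ℝ} (hA : ∀ u v, 0 ≤ A u v)
    (ha : IsSplitting a) (y : γ → ℝ) : ∑ u, y u * netFlow A a u ≤ directedTV A y := by
  rw [sum_mul_netFlow, directedTV]
  refine Finset.sum_le_sum fun u _ => Finset.sum_le_sum fun v _ => ?_
  obtain ⟨⟨h0, h1⟩, -⟩ := ha u v
  rw [mul_assoc]
  refine mul_le_mul_of_nonneg_left ?_ (hA u v)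
  rcases le_total (y u - y v) 0 with h | h
  · exact (mul_nonpos_of_nonneg_of_nonpos h0 h).trans (le_max_right _ _)
  · exact (mul_le_of_le_one_left h h1).trans (le_max_left _ _)

theorem exists_isSplitting_sum_mul_netFlow_eq (A : γ → γ → ℝ) (y : γ → ℝ) :
    ∃ a, IsSplitting a ∧ ∑ u, y u * netFlow A a u = directedTV A y := by
  refine ⟨fun u v => if y v < y u then 1 else if y u < y v then 0 else 1 / 2, ?_, ?_⟩
  · intro u v
    rcases lt_trichotomy (y u) (y v) with h | h | h
    · simp [h, h.not_gt]
    · norm_num [h]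
    · simp [h, h.not_gt]
  · rw [sum_mul_netFlow, directedTV]
    refine Finset.sum_congr rfl fun u _ => Finset.sum_congr rfl fun v _ => ?_
    rcases lt_trichotomy (y u) (y v) with h | h | h
    · simp [h, h.not_gt, max_eq_right (sub_nonpos.mpr h.le)]
    · simp [h]
    · simp [h, max_eq_left (sub_nonneg.mpr h.le)]

theorem exists_isMinOn_enorm2_netFlow_sub (A : γ → γ → ℝ) (g : γ → ℝ) :
    ∃ a ∈ {a | IsSplitting a}, IsMinOn (fun a => enorm2 (netFlow A a - g)) {a | IsSplitting a} a :=
  isCompact_setOf_isSplitting.exists_isMinOn ⟨fun _ _ => 1 / 2, fun _ _ => by norm_num⟩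
    (by unfold enorm2 netFlow; fun_prop)

theorem enorm2_eq_norm (v : γ → ℝ) : enorm2 v = ‖(WithLp.toLp 2 v : EuclideanSpace ℝ γ)‖ := by
  simp [enorm2, EuclideanSpace.norm_eq]

theorem sum_mul_eq_inner (y w : γ → ℝ) :
    ∑ u, y u * w u = ⟪(WithLp.toLp 2 y : EuclideanSpace ℝ γ), WithLp.toLp 2 w⟫_ℝ := by
  simp [PiLp.inner_apply, mul_comm]

theorem toLp_neg_div_enorm2 (w : γ → ℝ) :
    (WithLp.toLp 2 (fun u => -w u / enorm2 w) : EuclideanSpace ℝ γ)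
      = -(‖(WithLp.toLp 2 w : EuclideanSpace ℝ γ)‖⁻¹ • WithLp.toLp 2 w) := by
  ext u
  simp [enorm2_eq_norm, div_eq_inv_mul]

theorem enorm2_neg_div_enorm2_le_one (w : γ → ℝ) : enorm2 (fun u => -w u / enorm2 w) ≤ 1 := by
  rw [enorm2_eq_norm, toLp_neg_div_enorm2, norm_neg, norm_smul, norm_inv, norm_norm]
  exact inv_mul_le_one_of_le₀ le_rfl (norm_nonneg _)

theorem neg_enorm2_netFlow_sub_le {A a : γ → γ → ℝ} (hA : ∀ u v, 0 ≤ A u v) (ha : IsSplitting a)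
    (g : γ → ℝ) {y : γ → ℝ} (hy : enorm2 y ≤ 1) :
    -enorm2 (netFlow A a - g) ≤ directedTV A y - ∑ u, y u * g u := by
  rw [enorm2_eq_norm, WithLp.toLp_sub, sum_mul_eq_inner]
  rw [enorm2_eq_norm] at hy
  refine neg_norm_sub_le_of_inner_le ?_ hy
  rw [← sum_mul_eq_inner]
  exact sum_mul_netFlow_le_directedTV hA ha y

theorem directedTV_sub_le_neg_enorm2 {A a : γ → γ → ℝ} {g : γ → ℝ} (ha : IsSplitting a)
    (hmin : IsMinOn (fun a => enorm2 (netFlow A a - g)) {a | IsSplitting a} a) :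
    directedTV A (fun u => -(netFlow A a - g) u / enorm2 (netFlow A a - g))
      - ∑ u, -(netFlow A a - g) u / enorm2 (netFlow A a - g) * g u
      ≤ -enorm2 (netFlow A a - g) := by
  set y := fun u => -(netFlow A a - g) u / enorm2 (netFlow A a - g)
  obtain ⟨b, hb, hby⟩ := exists_isSplitting_sum_mul_netFlow_eq A y
  set K : Set (EuclideanSpace ℝ γ) := WithLp.toLp 2 '' (netFlow A '' {a | IsSplitting a})
  have hK : Convex ℝ K :=
    (convex_setOf_isSplitting.is_linear_image (isLinearMap_netFlow A)).linear_image
      (WithLp.linearEquiv 2 ℝ (γ → ℝ)).symm.toLinearMap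
  have hminK : IsMinOn (fun k => ‖k - WithLp.toLp 2 g‖) K (WithLp.toLp 2 (netFlow A a)) := by
    rintro _ ⟨_, ⟨b, hb, rfl⟩, rfl⟩
    simpa [enorm2_eq_norm] using hmin hb
  have key := inner_neg_smul_sub_le_neg_norm_of_isMinOn hK ⟨_, ⟨a, ha, rfl⟩, rfl⟩ hminK
    ⟨_, ⟨b, hb, rfl⟩, rfl⟩
  calc directedTV A y - ∑ u, y u * g u = ∑ u, y u * (netFlow A b - g) u := by
        simp only [← hby, Pi.sub_apply, mul_sub, Finset.sum_sub_distrib]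
    _ ≤ -enorm2 (netFlow A a - g) := by
        rw [sum_mul_eq_inner, toLp_neg_div_enorm2, enorm2_eq_norm]
        simpa only [WithLp.toLp_sub] using key

end DirectedTotalVariation

/-- Duality: `min_{‖y‖₂ ≤ 1} (Q₁⁽ᵍ⁾(y) − ⟨y, g̃⟩) = − min_{α} ‖f_A(α) − g̃‖₂`, and an optimal
primal solution is `y = −(f_A(α*) − g̃)/‖f_A(α*) − g̃‖₂` for a dual optimizer `α*` with
`f_A(α*) ≠ g̃`. -/
theorem stmt_17 {γ : Type*} [Fintype γ] (A : γ → γ → ℝ) (hA : ∀ u v, 0 ≤ A u v)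
    (gt : γ → ℝ) :
    let D : (γ → γ → ℝ) → Prop := fun a =>
      ∀ u v, a u v ∈ Set.Icc (0 : ℝ) 1 ∧ a u v + a v u = 1
    let fA : (γ → γ → ℝ) → γ → ℝ := fun a u => ∑ v, (A u v * a u v - A v u * a v u)
    let obj : (γ → ℝ) → ℝ := fun y =>
      (∑ u, ∑ v, A u v * max (y u - y v) 0) - ∑ u, y u * gt u
    (⨅ y : {y : γ → ℝ // enorm2 y ≤ 1}, obj y.1)
      = - (⨅ a : {a : γ → γ → ℝ // D a}, enorm2 (fun u => fA a.1 u - gt u)) ∧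
    ∀ a : γ → γ → ℝ, D a →
      (∀ b, D b → enorm2 (fun u => fA a u - gt u) ≤ enorm2 (fun u => fA b u - gt u)) →
      (fun u => fA a u - gt u) ≠ 0 →
      (enorm2 (fun u => -(fA a u - gt u) / enorm2 (fun u' => fA a u' - gt u')) ≤ 1 ∧
        ∀ y : γ → ℝ, enorm2 y ≤ 1 →
          obj (fun u => -(fA a u - gt u) / enorm2 (fun u' => fA a u' - gt u')) ≤ obj y) := by
  intro D fA obj
  have weak (a : γ → γ → ℝ) (ha : D a) (y : γ → ℝ) (hy : enorm2 y ≤ 1) :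
      -enorm2 (fun u => fA a u - gt u) ≤ obj y :=
    neg_enorm2_netFlow_sub_le hA ha gt hy
  have strong (a : γ → γ → ℝ) (ha : D a)
      (hmin : ∀ b, D b → enorm2 (fun u => fA a u - gt u) ≤ enorm2 (fun u => fA b u - gt u)) :
      obj (fun u => -(fA a u - gt u) / enorm2 (fun u' => fA a u' - gt u'))
        ≤ -enorm2 (fun u => fA a u - gt u) :=
    directedTV_sub_le_neg_enorm2 ha (isMinOn_iff.mpr hmin)
  refine ⟨?_, fun a ha hmin _ => ⟨enorm2_neg_div_enorm2_le_one _,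
    fun y hy => (strong a ha hmin).trans (weak a ha y hy)⟩⟩
  obtain ⟨a, ha, hmin⟩ := exists_isMinOn_enorm2_netFlow_sub A gt
  rw [show (⨅ b : {b // D b}, enorm2 (fun u => fA b.1 u - gt u)) = _ from hmin.iInf_eq ha]
  let y₀ : {y : γ → ℝ // enorm2 y ≤ 1} :=
    ⟨_, enorm2_neg_div_enorm2_le_one (fun u => fA a u - gt u)⟩
  have : Nonempty {y : γ → ℝ // enorm2 y ≤ 1} := ⟨y₀⟩
  refine le_antisymm ?_ (le_ciInf fun y => weak a ha y.1 y.2)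
  exact ciInf_le_of_le ⟨_, Set.forall_mem_range.mpr fun y => weak a ha y.1 y.2⟩ y₀
    (strong a ha (isMinOn_iff.mp hmin))
end
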